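/- Let G be a finite graph, s: V → [0,∞) a vertex weight function, d_s the shortest-path pseudometric induced by edge weights w({u,v}) = (s(u)+s(v))/2, and f: V → ℝ a non-constant function that is 1-Lipschitz with respect to d_s. Then the vertex sparsity of G is at most (Σ_{v∈V} s(v)) / (Σ_{{u,v}∈binom(V,2)} |f(u)-f(v)|). -/

import Mathlib

open Finset

variable {V : Type*} [Fintype V] [DecidableEq V]

/-- The weight of a walk under the edge weights `w({a,b}) = (s(a)+s(b))/2` derived from a
vertex weight function `s`. -/
noncomputable def walkWeight (G : SimpleGraph V) (s : V → ℝ) {u v : V}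
    (p : G.Walk u v) : ℝ :=
  (p.edges.map (Sym2.lift ⟨fun a b => (s a + s b) / 2, fun a b => by ring⟩)).sum

/-- The shortest-path pseudometric induced by the vertex weights `s`. -/
noncomputable def spDist (G : SimpleGraph V) (s : V → ℝ) (u v : V) : ℝ :=
  sInf {r : ℝ | ∃ p : G.Walk u v, r = walkWeight G s p}

/-- `(A,B,S)` is a vertex cut of `G`. -/
def IsVertexCut7 (G : SimpleGraph V) (A B S : Finset V) : Prop :=
  A.Nonempty ∧ B.Nonempty ∧ Disjoint A B ∧ Disjoint A S ∧ Disjoint B S ∧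
    A ∪ B ∪ S = Finset.univ ∧ ∀ a ∈ A, ∀ b ∈ B, ¬ G.Adj a b

open MeasureTheory

/-!
Replace each vertex `v` by the interval `(f v - s v / 2, f v + s v / 2]`. For a threshold `t`,
the vertices whose interval lies left of `t`, contains `t`, or lies right of `t` form a vertex
cut: an edge from the left part to the right part would violate the Lipschitz condition. With
`P_t`, `Q_t` the vertices whose interval starts before `t`, resp. ends at or after `t`, this
gives `φ |P_t| |Q_t| ≤ |P_t ∩ Q_t|` for every `t`, where `φ` is the vertex sparsity (also when
one side of the cut is empty, as `φ |V| ≤ 1`). Integrating over `t`, the right side gives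
`∑ v, s v` and the left side `φ ∑_{u,v} (f v + s v / 2 - f u + s u / 2)⁺`, which is at least
`φ ∑_{u,v} (f v - f u)⁺ = φ ∑_{u,v} |f u - f v| / 2`.
-/

section Intervals

variable {ι : Type*} [Fintype ι]

lemma integrable_indicator_Ioc_one (a b : ℝ) :
    Integrable ((Set.Ioc a b).indicator (1 : ℝ → ℝ)) :=
  (integrable_indicator_iff measurableSet_Ioc).2 (integrableOn_const measure_Ioc_lt_top.ne)

lemma natCast_card_mem_Ioc (a b : ι → ℝ) (t : ℝ) :
    (#{i | t ∈ Set.Ioc (a i) (b i)} : ℝ) = ∑ i, (Set.Ioc (a i) (b i)).indicator 1 t := by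
  simp [Set.indicator_apply]

lemma integrable_card_mem_Ioc (a b : ι → ℝ) :
    Integrable fun t => (#{i | t ∈ Set.Ioc (a i) (b i)} : ℝ) := by
  simp_rw [natCast_card_mem_Ioc]
  exact integrable_finsetSum _ fun i _ => integrable_indicator_Ioc_one _ _

lemma integral_card_mem_Ioc (a b : ι → ℝ) :
    ∫ t, (#{i | t ∈ Set.Ioc (a i) (b i)} : ℝ) = ∑ i, max (b i - a i) 0 := by
  simp_rw [natCast_card_mem_Ioc]
  rw [integral_finsetSum _ fun i _ => integrable_indicator_Ioc_one _ _]
  simp [integral_indicator_one measurableSet_Ioc, Real.volume_real_Ioc]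

lemma sum_sum_abs_sub_eq (f : ι → ℝ) :
    ∑ u, ∑ v, |f u - f v| = 2 * ∑ u, ∑ v, max (f v - f u) 0 := by
  simp_rw [← max_zero_add_max_neg_zero_eq_abs_self, neg_sub, sum_add_distrib]
  rw [sum_comm (f := fun u v => max (f u - f v) 0)]
  ring

lemma sum_sum_abs_sub_pos {f : ι → ℝ} (h : ∃ u v, f u ≠ f v) :
    0 < ∑ u, ∑ v, |f u - f v| := by
  obtain ⟨u, v, huv⟩ := h
  refine sum_pos' (fun _ _ => sum_nonneg fun _ _ => abs_nonneg _) ⟨u, mem_univ u, ?_⟩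
  exact sum_pos' (fun _ _ => abs_nonneg _) ⟨v, mem_univ v, abs_pos.2 (sub_ne_zero.2 huv)⟩

end Intervals

section Walks

variable {W : Type*} {G : SimpleGraph W} {s : W → ℝ}

lemma walkWeight_nonneg (hs : ∀ v, 0 ≤ s v) {u v : W} (p : G.Walk u v) :
    0 ≤ walkWeight G s p := by
  induction p with
  | nil => simp [walkWeight]
  | @cons a b _ _ p ih =>
    simp only [walkWeight, SimpleGraph.Walk.edges_cons, List.map_cons, List.sum_cons,
      Sym2.lift_mk] at ih ⊢
    linarith [hs a, hs b]

lemma spDist_le_of_adj (hs : ∀ v, 0 ≤ s v) {a b : W} (hab : G.Adj a b) :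
    spDist G s a b ≤ (s a + s b) / 2 := by
  refine csInf_le ⟨0, ?_⟩ ⟨.cons hab .nil, by simp [walkWeight]⟩
  rintro _ ⟨p, rfl⟩
  exact walkWeight_nonneg hs p

end Walks

section Sparsity

variable {G : SimpleGraph V}

noncomputable def cutSparsity (A B S : Finset V) : ℝ :=
  (S.card : ℝ) / (((A ∪ S).card : ℝ) * ((B ∪ S).card : ℝ))

noncomputable def vertexSparsity (G : SimpleGraph V) : ℝ :=
  sInf {r : ℝ | ∃ A B S : Finset V, IsVertexCut7 G A B S ∧ r = cutSparsity A B S}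

lemma zero_mem_lowerBounds_cutSparsity (G : SimpleGraph V) :
    0 ∈ lowerBounds
      {r : ℝ | ∃ A B S : Finset V, IsVertexCut7 G A B S ∧ r = cutSparsity A B S} := by
  rintro _ ⟨A, B, S, -, rfl⟩
  unfold cutSparsity
  positivity

lemma cutSparsity_mul_card_le {A B S : Finset V} (h : IsVertexCut7 G A B S) :
    cutSparsity A B S * Fintype.card V ≤ 1 := by
  obtain ⟨hA, hB, hAB, hAS, hBS, hcover, -⟩ := h
  have hn : (A.card : ℝ) + B.card + S.card = Fintype.card V := by
    rw [← card_univ, ← hcover, card_union_of_disjoint (disjoint_union_left.2 ⟨hAS, hBS⟩),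
      card_union_of_disjoint hAB]
    push_cast; ring
  have ha : (1 : ℝ) ≤ A.card := by exact_mod_cast hA.card_pos
  have hb : (1 : ℝ) ≤ B.card := by exact_mod_cast hB.card_pos
  unfold cutSparsity
  rw [card_union_of_disjoint hAS, card_union_of_disjoint hBS, ← hn, div_mul_eq_mul_div,
    div_le_one (by positivity)]
  push_cast
  nlinarith

lemma vertexSparsity_nonneg (G : SimpleGraph V) : 0 ≤ vertexSparsity G :=
  Real.sInf_nonneg fun _ hr => zero_mem_lowerBounds_cutSparsity G hr

lemma vertexSparsity_le_cutSparsity {A B S : Finset V} (h : IsVertexCut7 G A B S) :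
    vertexSparsity G ≤ cutSparsity A B S :=
  csInf_le ⟨0, zero_mem_lowerBounds_cutSparsity G⟩ ⟨A, B, S, h, rfl⟩

lemma vertexSparsity_mul_card_le (G : SimpleGraph V) :
    vertexSparsity G * Fintype.card V ≤ 1 := by
  by_cases h : ∃ A B S : Finset V, IsVertexCut7 G A B S
  · obtain ⟨A, B, S, h⟩ := h
    exact (mul_le_mul_of_nonneg_right (vertexSparsity_le_cutSparsity h) (by positivity)).trans
      (cutSparsity_mul_card_le h)
  · push Not at h
    simp [vertexSparsity, h]

lemma vertexSparsity_mul_card_mul_card_le {P Q : Finset V} (hPQ : P ∪ Q = univ)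
    (hPQ_adj : ∀ a ∉ Q, ∀ b ∉ P, ¬ G.Adj a b) :
    vertexSparsity G * (#P * #Q) ≤ #(P ∩ Q) := by
  have hφ := vertexSparsity_mul_card_le G
  have hφ₀ := vertexSparsity_nonneg G
  by_cases hQ : Q = univ
  · subst hQ
    rw [inter_univ, card_univ]
    nlinarith [(#P).cast_nonneg (α := ℝ)]
  by_cases hP : P = univ
  · subst hP
    rw [univ_inter, card_univ]
    nlinarith [(#Q).cast_nonneg (α := ℝ)]
  obtain ⟨a, ha⟩ : ∃ a, a ∉ Q := by simpa [eq_univ_iff_forall] using hQ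
  obtain ⟨b, hb⟩ : ∃ b, b ∉ P := by simpa [eq_univ_iff_forall] using hP
  have hcover : ∀ v, v ∈ P ∨ v ∈ Q := fun v => mem_union.1 (hPQ ▸ mem_univ v)
  have hcut : IsVertexCut7 G Qᶜ Pᶜ (P ∩ Q) := by
    refine ⟨⟨a, mem_compl.2 ha⟩, ⟨b, mem_compl.2 hb⟩, ?_, ?_, ?_, ?_, ?_⟩
    · exact disjoint_left.2 fun v hvQ hvP => (hcover v).elim (mem_compl.1 hvP) (mem_compl.1 hvQ)
    · exact disjoint_left.2 fun v hvQ hv => mem_compl.1 hvQ (mem_inter.1 hv).2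
    · exact disjoint_left.2 fun v hvP hv => mem_compl.1 hvP (mem_inter.1 hv).1
    · ext v; have := hcover v; simp only [mem_union, mem_compl, mem_inter, mem_univ]; tauto
    · exact fun a ha b hb => hPQ_adj a (mem_compl.1 ha) b (mem_compl.1 hb)
  have hA : Qᶜ ∪ (P ∩ Q) = P := by
    ext v; have := hcover v; simp only [mem_union, mem_compl, mem_inter]; tauto
  have hB : Pᶜ ∪ (P ∩ Q) = Q := by
    ext v; have := hcover v; simp only [mem_union, mem_compl, mem_inter]; tauto
  have hpos : (0 : ℝ) < #P * #Q := by
    have hP₀ : P.Nonempty := ⟨a, (hcover a).resolve_right ha⟩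
    have hQ₀ : Q.Nonempty := ⟨b, (hcover b).resolve_left hb⟩
    positivity
  have := vertexSparsity_le_cutSparsity hcut
  rwa [cutSparsity, hA, hB, le_div_iff₀ hpos] at this

end Sparsity

section Threshold

variable {G : SimpleGraph V} {s f : V → ℝ}

lemma vertexSparsity_mul_card_threshold (hs : ∀ v, 0 ≤ s v)
    (hLip : ∀ u v, |f u - f v| ≤ spDist G s u v) (t : ℝ) :
    vertexSparsity G * #{p : V × V | t ∈ Set.Ioc (f p.1 - s p.1 / 2) (f p.2 + s p.2 / 2)}
      ≤ #{v | t ∈ Set.Ioc (f v - s v / 2) (f v + s v / 2)} := by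
  set P : Finset V := {v | f v - s v / 2 < t}
  set Q : Finset V := {v | t ≤ f v + s v / 2}
  have hprod :
      #{p : V × V | t ∈ Set.Ioc (f p.1 - s p.1 / 2) (f p.2 + s p.2 / 2)} = #P * #Q := by
    rw [← card_product, ← univ_product_univ, ← filter_product]
    rfl
  have hinter : ({v | t ∈ Set.Ioc (f v - s v / 2) (f v + s v / 2)} : Finset V) = P ∩ Q :=
    filter_and _ _ _
  have hPQ : P ∪ Q = univ := by
    refine eq_univ_of_forall fun v => ?_
    simp only [P, Q, mem_union, mem_filter, mem_univ, true_and]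
    by_contra! h
    linarith [hs v]
  have hPQ_adj : ∀ a ∉ Q, ∀ b ∉ P, ¬ G.Adj a b := by
    intro a ha b hb hab
    simp only [P, Q, mem_filter, mem_univ, true_and, not_le, not_lt] at ha hb
    have := (neg_le_abs (f a - f b)).trans ((hLip a b).trans (spDist_le_of_adj hs hab))
    linarith
  rw [hprod, hinter]
  exact_mod_cast vertexSparsity_mul_card_mul_card_le hPQ hPQ_adj

lemma vertexSparsity_mul_sum_le (hs : ∀ v, 0 ≤ s v)
    (hLip : ∀ u v, |f u - f v| ≤ spDist G s u v) :
    vertexSparsity G * ∑ u, ∑ v, max (f v + s v / 2 - (f u - s u / 2)) 0 ≤ ∑ v, s v := by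
  have h := integral_mono ((integrable_card_mem_Ioc _ _).const_mul _)
    (integrable_card_mem_Ioc _ _) (vertexSparsity_mul_card_threshold hs hLip)
  rw [integral_const_mul, integral_card_mem_Ioc (fun p : V × V => f p.1 - s p.1 / 2)
    (fun p => f p.2 + s p.2 / 2), integral_card_mem_Ioc, Fintype.sum_prod_type] at h
  have hwidth : ∑ v, max (f v + s v / 2 - (f v - s v / 2)) 0 = ∑ v, s v :=
    sum_congr rfl fun v _ => by
      rw [show f v + s v / 2 - (f v - s v / 2) = s v by ring, max_eq_left (hs v)]
  rwa [hwidth] at h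

end Threshold

/-- Feige–Hajiaghayi–Lee: if `s : V → [0,∞)` is a vertex weight function, `d_s` the induced
shortest-path pseudometric, and `f : V → ℝ` a non-constant `1`-Lipschitz function w.r.t.
`d_s`, then the vertex sparsity of `G` is at most
`(∑_v s(v)) / (∑_{{u,v}} |f(u)-f(v)|)`. -/
theorem stmt_7 (G : SimpleGraph V) (s : V → ℝ) (hs : ∀ v, 0 ≤ s v)
    (f : V → ℝ) (hnonconst : ∃ u v, f u ≠ f v)
    (hLip : ∀ u v, |f u - f v| ≤ spDist G s u v) :
    sInf {r : ℝ | ∃ A B S : Finset V, IsVertexCut7 G A B S ∧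
        r = (S.card : ℝ) / (((A ∪ S).card : ℝ) * ((B ∪ S).card : ℝ))}
      ≤ (∑ v, s v) / ((∑ u, ∑ v, |f u - f v|) / 2) := by
  show vertexSparsity G ≤ _
  have hD := sum_sum_abs_sub_pos hnonconst
  rw [sum_sum_abs_sub_eq] at hD
  rw [sum_sum_abs_sub_eq, mul_div_cancel_left₀ _ two_ne_zero,
    le_div_iff₀ (pos_of_mul_pos_right hD zero_le_two)]
  calc vertexSparsity G * ∑ u, ∑ v, max (f v - f u) 0
      ≤ vertexSparsity G * ∑ u, ∑ v, max (f v + s v / 2 - (f u - s u / 2)) 0 := by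
        refine mul_le_mul_of_nonneg_left (sum_le_sum fun u _ => sum_le_sum fun v _ => ?_)
          (vertexSparsity_nonneg G)
        exact max_le_max_right 0 (by linarith [hs u, hs v])
    _ ≤ ∑ v, s v := vertexSparsity_mul_sum_le hs hLip
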